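/- Let p be a prime number such that 2p + 1 is not prime. Let P ∈ ℤ[X] be a monic irreducible polynomial of degree p whose constant term is 1 or −1 and all of whose complex roots are real and positive. Then the largest root of P is strictly greater than 4 + 4^{−(2p+3)}. -/

import Mathlib

/-!
Let `x` be the largest root of `P` and suppose that `x ≤ 4 + δ`, where `δ = 4 ^ (-(2p + 3))`.

If `x ≥ 4`, then `|P(4)| = ∏ |4 - z|` over the roots `z ∈ (0, 4 + δ]` is at most
`δ · 4 ^ (p - 1) < 1`, whereas `P(4)` is a nonzero integer because `P` is irreducible of degree
`p ≥ 2`.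

If `x < 4`, all roots lie in `(0, 4)`. Write `x = y + 2 + y⁻¹` with `|y| = 1`. Then `y` is a root of
the monic integer polynomial `T ^ p P(T + 2 + T⁻¹)` of degree `2p`, so it is an algebraic integer of
degree at most `2p`, and every conjugate `y'` of `y` satisfies `y' + 2 + y'⁻¹ = x'` for a conjugate
`x' ∈ (0, 4)` of `x`, whence `|y'| = 1`. By Kronecker's theorem `y` is a root of unity, of order `m`
say. Its degree `φ(m)` is a multiple of `p = [ℚ(x) : ℚ]` and at most `2p`, which forces `φ(m) = 2p`,
and then `2p + 1` is prime.
-/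

open Polynomial IntermediateField Finset

/-- By `φ(m) = ∏ q ^ (k - 1) (q - 1)`, either `p ^ 2 ∣ m`, impossible for `p > 3`, or `p ∣ q - 1`
for a prime `q ∣ m`, and then `q - 1 ∣ φ(m) = 2p` leaves only `q = 2p + 1`. -/
theorem Nat.prime_two_mul_add_one_of_totient_eq {p m : ℕ} (hp : p.Prime) (hp3 : 3 < p)
    (h : m.totient = 2 * p) : (2 * p + 1).Prime := by
  have hm : m ≠ 0 := by rintro rfl; simp at h; omega
  have hpd : p ∣ m.factorization.prod fun q k => q ^ (k - 1) * (q - 1) := by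
    rw [← Nat.totient_eq_prod_factorization hm, h]; exact dvd_mul_left p 2
  obtain ⟨q, hqm, hq⟩ := (Prime.dvd_finsetProd_iff hp.prime _).mp hpd
  rw [Nat.support_factorization] at hqm
  have hq' := Nat.prime_of_mem_primeFactors hqm
  rcases (Nat.Prime.dvd_mul hp).mp hq with hpow | hsub
  · have hpq : p = q := (Nat.prime_dvd_prime_iff_eq hp hq').mp (hp.dvd_of_dvd_pow hpow)
    subst hpq
    have hk : 2 ≤ m.factorization p := by
      by_contra! hk
      rw [show m.factorization p - 1 = 0 by omega, pow_zero] at hpow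
      exact hp.one_lt.ne' (Nat.dvd_one.mp hpow)
    have hsq : (p ^ 2).totient ∣ m.totient :=
      Nat.totient_dvd_of_dvd ((pow_dvd_pow p hk).trans (Nat.ordProj_dvd m p))
    rw [Nat.totient_prime_pow hp two_pos, h, show 2 - 1 = 1 from rfl, pow_one, mul_comm] at hsq
    have := Nat.le_of_dvd (by omega) (Nat.dvd_of_mul_dvd_mul_right hp.pos hsq)
    omega
  · have hq1 : q - 1 ∣ 2 * p :=
      h ▸ Nat.totient_prime hq' ▸ Nat.totient_dvd_of_dvd (Nat.dvd_of_mem_primeFactors hqm)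
    have hq2 : q ≠ 2 := by
      rintro rfl
      exact absurd (Nat.le_of_dvd one_pos hsub) (by omega)
    have h2p : 2 * p ∣ q - 1 := by
      refine Nat.Coprime.mul_dvd_of_dvd_of_dvd
        ((Nat.coprime_primes Nat.prime_two hp).mpr (by omega)) ?_ hsub
      obtain ⟨k, hk⟩ := hq'.odd_of_ne_two hq2
      exact ⟨k, by omega⟩
    have : q = 2 * p + 1 := by have := hq'.two_le; have := Nat.dvd_antisymm hq1 h2p; omega
    exact this ▸ hq'

theorem Nat.prime_two_mul_add_one_of_dvd_totient {p m : ℕ} (hp : p.Prime) (hm : m ≠ 0)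
    (hdvd : p ∣ m.totient) (hle : m.totient ≤ 2 * p) : (2 * p + 1).Prime := by
  rcases le_or_gt p 3 with hp3 | hp3
  · have := hp.two_le
    interval_cases p <;> norm_num
  obtain ⟨t, ht⟩ := hdvd
  have htot : 0 < m.totient := Nat.totient_pos.mpr (Nat.pos_of_ne_zero hm)
  obtain rfl | rfl : t = 1 ∨ t = 2 := by
    have : t ≤ 2 := Nat.le_of_mul_le_mul_left (by omega : p * t ≤ p * 2) hp.pos
    interval_cases t <;> simp_all
  · rw [mul_one] at ht
    rcases le_or_gt m 2 with hm2 | hm2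
    · have := Nat.totient_le m; omega
    · obtain ⟨k, hk⟩ := Nat.totient_even hm2
      obtain ⟨j, hj⟩ := hp.odd_of_ne_two (by omega)
      omega
  · exact Nat.prime_two_mul_add_one_of_totient_eq hp hp3 (by rw [ht, mul_comm])

theorem Complex.exists_add_inv_eq_ofReal {b : ℝ} (hb : |b| ≤ 2) :
    ∃ y : ℂ, y ≠ 0 ∧ y + y⁻¹ = b := by
  have hcos : Real.cos (Real.arccos (b / 2)) = b / 2 := by
    rw [abs_le] at hb
    exact Real.cos_arccos (by linarith) (by linarith)
  refine ⟨exp (Real.arccos (b / 2) * I), exp_ne_zero _, ?_⟩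
  rw [← exp_neg, ← neg_mul, ← two_cos, ← ofReal_cos, hcos]
  push_cast
  ring

theorem Complex.norm_eq_one_of_add_inv_eq_ofReal {w : ℂ} {b : ℝ} (hw : w ≠ 0)
    (h : w + w⁻¹ = b) (hb : |b| < 2) : ‖w‖ = 1 := by
  -- `Im (w + w⁻¹) = Im w · (1 - 1 / |w|²)`, and a real `w` has `|w + w⁻¹| ≥ 2`.
  have him : w.im - w.im / normSq w = 0 := by
    simpa [inv_im, neg_div, ← sub_eq_add_neg] using congrArg im h
  have hre : w.re + w.re / normSq w = b := by simpa [inv_re] using congrArg re h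
  by_cases h0 : w.im = 0
  · exfalso
    have hre0 : w.re ≠ 0 := fun h => hw (ext h h0)
    have hn : normSq w = w.re * w.re := by simp [normSq_apply, h0]
    rw [hn, div_mul_cancel_left₀ hre0] at hre
    rw [← hre, abs_lt] at hb
    have : w.re * w.re⁻¹ = 1 := mul_inv_cancel₀ hre0
    nlinarith [sq_nonneg (w.re - w.re⁻¹)]
  · have hn : normSq w ≠ 0 := normSq_eq_zero.not.mpr hw
    have h1 : w.im * (normSq w - 1) = 0 := by field_simp at him; linear_combination him
    rw [norm_def, sub_eq_zero.mp ((mul_eq_zero.mp h1).resolve_left h0), Real.sqrt_one]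

theorem Complex.aeval_ofReal {R : Type*} [CommSemiring R] [Algebra R ℝ] (P : R[X]) (x : ℝ) :
    aeval (x : ℂ) P = aeval x P := by
  rw [← Complex.coe_algebraMap, aeval_algebraMap_apply]

theorem Complex.aeval_re_eq_zero {R : Type*} [CommSemiring R] [Algebra R ℝ] {P : R[X]} {z : ℂ}
    (hz : aeval z P = 0) (him : z.im = 0) : aeval z.re P = 0 := by
  have hz' : (z.re : ℂ) = z := Complex.ext rfl (by simp [him])
  rwa [← hz', Complex.aeval_ofReal, Complex.ofReal_eq_zero] at hz

namespace Polynomial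

variable {R : Type*} [CommRing R] {P : R[X]}

/-- `T ^ deg P * P (T + 2 + T⁻¹)`, with denominators cleared by `T + 2 + T⁻¹ = (T + 1) ^ 2 / T`. -/
noncomputable def joukowski (P : R[X]) : R[X] :=
  ∑ k ∈ range (P.natDegree + 1), C (P.coeff k) * (X + 1) ^ (2 * k) * X ^ (P.natDegree - k)

theorem aeval_joukowski {K : Type*} [Field K] [Algebra R K] (P : R[X]) {w : K} (hw : w ≠ 0) :
    aeval w P.joukowski = w ^ P.natDegree * aeval (w + 2 + w⁻¹) P := by
  rw [joukowski, map_sum, aeval_eq_sum_range (p := P), Finset.mul_sum]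
  refine Finset.sum_congr rfl fun k hk => ?_
  have hsq : (w + 2 + w⁻¹) * w = (w + 1) ^ 2 := by field_simp; ring
  have hpow : w ^ P.natDegree = w ^ (P.natDegree - k) * w ^ k := by
    rw [← pow_add, Nat.sub_add_cancel (Nat.lt_succ_iff.mp (Finset.mem_range.mp hk))]
  simp only [map_mul, map_pow, map_add, aeval_C, aeval_X, map_one, Algebra.smul_def, hpow,
    pow_mul, ← hsq, mul_pow]
  ring

theorem IsMonicOfDegree.joukowski [Nontrivial R] {n : ℕ} (hP : IsMonicOfDegree P n) :
    IsMonicOfDegree P.joukowski (2 * n) := by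
  obtain ⟨rfl, hmonic⟩ := hP
  set n := P.natDegree
  have hlead : IsMonicOfDegree ((X + C 1 : R[X]) ^ (2 * n)) (2 * n) := by
    simpa [mul_comm] using (isMonicOfDegree_X_add_one (1 : R)).pow (2 * n)
  have hlow : (∑ k ∈ range n, C (P.coeff k) * (X + 1) ^ (2 * k) * X ^ (n - k)).degree <
      ((X + C 1 : R[X]) ^ (2 * n)).degree := by
    rw [degree_eq_natDegree hlead.ne_zero, hlead.natDegree_eq]
    refine (degree_sum_le _ _).trans_lt
      ((Finset.sup_lt_iff (WithBot.bot_lt_coe _)).mpr fun k hk => ?_)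
    have hk := Finset.mem_range.mp hk
    calc (C (P.coeff k) * (X + 1 : R[X]) ^ (2 * k) * X ^ (n - k)).degree
        ≤ ((2 * k + (n - k) : ℕ) : WithBot ℕ) := by
          compute_degree
          norm_cast
      _ < ((2 * n : ℕ) : WithBot ℕ) := by exact_mod_cast (by omega)
  have hsplit : P.joukowski = ∑ k ∈ range n, C (P.coeff k) * (X + 1) ^ (2 * k) * X ^ (n - k) +
      (X + C 1) ^ (2 * n) := by
    rw [Polynomial.joukowski, sum_range_succ, hmonic.coeff_natDegree, Nat.sub_self, C_1, one_mul,
      pow_zero, mul_one]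
  rw [hsplit]
  exact ⟨(natDegree_add_eq_right_of_degree_lt hlow).trans hlead.natDegree_eq,
    hlead.monic.add_of_right hlow⟩

theorem norm_eval_le_mul_pow {K : Type*} [NormedField K] {f : K[X]} (hf : f.Monic)
    (hsplit : f.Splits) {a z₀ : K} (hz₀ : z₀ ∈ f.roots) {ε c : ℝ} (hε : ‖a - z₀‖ ≤ ε)
    (hc : ∀ z ∈ f.roots, ‖a - z‖ ≤ c) : ‖f.eval a‖ ≤ ε * c ^ (f.natDegree - 1) := by
  obtain ⟨s, hs⟩ := Multiset.exists_cons_of_mem hz₀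
  have hcard : f.natDegree - 1 = Multiset.card s := by
    rw [hsplit.natDegree_eq_card_roots, hs, Multiset.card_cons, Nat.add_sub_cancel]
  have hrest : ‖(s.map (a - ·)).prod‖ ≤ c ^ Multiset.card s := by
    change (normHom : K →*₀ ℝ) _ ≤ _
    rw [map_multiset_prod, ← Multiset.card_map (a - ·) s]
    refine Multiset.prod_map_le_pow_card (fun w _ => norm_nonneg w) fun w hw => ?_
    obtain ⟨z, hz, rfl⟩ := Multiset.mem_map.mp hw
    exact hc z (hs ▸ Multiset.mem_cons_of_mem hz)
  rw [hsplit.eval_eq_prod_roots_of_monic hf, hs, Multiset.map_cons, Multiset.prod_cons,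
    norm_mul, hcard]
  exact mul_le_mul hε hrest (norm_nonneg _) ((norm_nonneg _).trans hε)

end Polynomial

theorem minpoly.natDegree_dvd_of_mem_adjoin_simple {F L : Type*} [Field F] [Field L]
    [Algebra F L] {x y : L} (hy : IsIntegral F y) (hx : x ∈ F⟮y⟯) :
    (minpoly F x).natDegree ∣ (minpoly F y).natDegree := by
  have := adjoin.finiteDimensional hy
  have h := minpoly.degree_dvd (IsIntegral.of_finite F (⟨x, hx⟩ : F⟮y⟯))
  rwa [← minpoly.algebraMap_eq (algebraMap F⟮y⟯ L).injective, adjoin.finrank hy] at h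

theorem exists_pow_eq_one_of_aeval_add_two_add_inv {P : ℤ[X]}
    (hroots : ∀ z : ℂ, aeval z P = 0 → z.im = 0 ∧ 0 < z.re ∧ z.re < 4) {y : ℂ} (hy0 : y ≠ 0)
    (hy : IsIntegral ℤ y) (hyP : aeval (y + 2 + y⁻¹) P = 0) : ∃ n, 0 < n ∧ y ^ n = 1 := by
  let K := ℚ⟮y⟯
  have : FiniteDimensional ℚ K := adjoin.finiteDimensional hy.tower_top
  have : NumberField K := ⟨⟩
  set yK := AdjoinSimple.gen ℚ y
  have hgen : algebraMap K ℂ yK = y := AdjoinSimple.algebraMap_gen ℚ y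
  have hyK : IsIntegral ℤ yK := by
    rwa [← isIntegral_algebraMap_iff (algebraMap K ℂ).injective, hgen]
  have hyK0 : yK ≠ 0 := by rintro h; simp [← hgen, h] at hy0
  have hPK : aeval (yK + 2 + yK⁻¹) P = 0 := (algebraMap K ℂ).injective <| by
    rw [← aeval_algebraMap_apply, map_add, map_add, map_inv₀, hgen, map_ofNat, hyP, map_zero]
  obtain ⟨n, hn, h⟩ := NumberField.Embeddings.pow_eq_one_of_norm_eq_one K ℂ hyK fun φ => by
    have hφ := congrArg φ.toIntAlgHom hPK
    rw [map_zero, ← aeval_algHom_apply, map_add, map_add, map_inv₀, map_ofNat,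
      RingHom.toIntAlgHom_apply] at hφ
    set u := φ yK + 2 + (φ yK)⁻¹ with hu
    obtain ⟨him, hpos, hlt⟩ := hroots u hφ
    have hreal : (u.re : ℂ) = u :=
      Complex.ext (Complex.ofReal_re _) (by rw [Complex.ofReal_im, him])
    refine Complex.norm_eq_one_of_add_inv_eq_ofReal (b := u.re - 2) ((map_ne_zero φ).mpr hyK0)
      ?_ (by rw [abs_lt]; constructor <;> linarith)
    rw [Complex.ofReal_sub, Complex.ofReal_ofNat, hreal, hu]
    ring
  exact ⟨n, hn, by rw [← hgen, ← map_pow, h, map_one]⟩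

theorem prime_two_mul_add_one_of_roots_mem_Ioo {P : ℤ[X]} (hmonic : P.Monic)
    (hirr : Irreducible P) (hp : P.natDegree.Prime)
    (hroots : ∀ z : ℂ, aeval z P = 0 → z.im = 0 ∧ 0 < z.re ∧ z.re < 4) {x : ℂ}
    (hx : aeval x P = 0) : (2 * P.natDegree + 1).Prime := by
  obtain ⟨him, hpos, hlt⟩ := hroots x hx
  obtain ⟨y, hy0, hyx⟩ := Complex.exists_add_inv_eq_ofReal (b := x.re - 2)
    (by rw [abs_le]; constructor <;> linarith)
  have hxy : y + 2 + y⁻¹ = x := by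
    rw [add_right_comm, hyx]; apply Complex.ext <;> simp [him]
  have hJ : IsMonicOfDegree P.joukowski (2 * P.natDegree) := IsMonicOfDegree.joukowski ⟨rfl, hmonic⟩
  have hyint : IsIntegral ℤ y :=
    ⟨_, hJ.monic, by rw [← aeval_def, aeval_joukowski _ hy0, hxy, hx, mul_zero]⟩
  obtain ⟨n, hn, hyn⟩ := exists_pow_eq_one_of_aeval_add_two_add_inv hroots hy0 hyint (hxy ▸ hx)
  have hord : 0 < orderOf y := (isOfFinOrder_iff_pow_eq_one.mpr ⟨n, hn, hyn⟩).orderOf_pos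
  have hdeg : (minpoly ℚ y).natDegree = (orderOf y).totient := by
    rw [← cyclotomic_eq_minpoly_rat (IsPrimitiveRoot.orderOf y) hord, natDegree_cyclotomic]
  have hdvd : P.natDegree ∣ (minpoly ℚ y).natDegree := by
    have hmin : minpoly ℚ x = P.map (Int.castRingHom ℚ) :=
      (minpoly.eq_of_irreducible_of_monic
        ((IsPrimitive.Int.irreducible_iff_irreducible_map_cast hmonic.isPrimitive).mp hirr)
        (by rwa [← algebraMap_int_eq, aeval_map_algebraMap]) (hmonic.map _)).symm
    have hmem : x ∈ ℚ⟮y⟯ := hxy ▸ add_mem (add_mem (mem_adjoin_simple_self ℚ y) (ofNat_mem _ 2))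
      (inv_mem (mem_adjoin_simple_self ℚ y))
    simpa [hmin, hmonic.natDegree_map] using
      minpoly.natDegree_dvd_of_mem_adjoin_simple hyint.tower_top hmem
  have hle : (minpoly ℚ y).natDegree ≤ 2 * P.natDegree := by
    rw [← hJ.natDegree_eq, ← hJ.monic.natDegree_map (algebraMap ℤ ℚ)]
    refine natDegree_le_natDegree (minpoly.min ℚ y (hJ.monic.map _) ?_)
    rw [aeval_map_algebraMap, aeval_joukowski _ hy0, hxy, hx, mul_zero]
  exact Nat.prime_two_mul_add_one_of_dvd_totient hp hord.ne' (hdeg ▸ hdvd) (hdeg ▸ hle)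

theorem one_le_mul_four_pow_of_roots_le {P : ℤ[X]} (hmonic : P.Monic) (h4 : ¬P.IsRoot 4)
    {ε : ℝ} (hε : ε ≤ 4) (hroots : ∀ z : ℂ, aeval z P = 0 → z.im = 0 ∧ 0 < z.re ∧ z.re ≤ 4 + ε)
    {x : ℝ} (hx : aeval x P = 0) (h4x : 4 ≤ x) : 1 ≤ ε * 4 ^ (P.natDegree - 1) := by
  set f := P.map (algebraMap ℤ ℂ)
  have hmem : ∀ {z : ℂ}, z ∈ f.roots ↔ aeval z P = 0 := fun {z} =>
    mem_aroots.trans (and_iff_right hmonic.ne_zero)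
  have hdist : ∀ z ∈ f.roots, ‖(4 : ℂ) - z‖ = |4 - z.re| := fun z hz => by
    have : (4 : ℂ) - z = ((4 - z.re : ℝ) : ℂ) :=
      Complex.ext (by simp) (by simp [(hroots z (hmem.mp hz)).1])
    rw [this, Complex.norm_real, Real.norm_eq_abs]
  have hx' : (x : ℂ) ∈ f.roots := hmem.mpr (by rw [Complex.aeval_ofReal, hx, Complex.ofReal_zero])
  have hxε : x ≤ 4 + ε := by simpa using (hroots x (hmem.mp hx')).2.2
  calc (1 : ℝ) ≤ ‖f.eval 4‖ := by
        rw [eval_map_algebraMap, ← map_ofNat (algebraMap ℤ ℂ) 4, aeval_algebraMap_apply,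
          coe_aeval_eq_eval, eq_intCast, Complex.norm_intCast]
        exact_mod_cast Int.one_le_abs h4
    _ ≤ ε * 4 ^ (f.natDegree - 1) := by
        refine norm_eval_le_mul_pow (hmonic.map _) (IsAlgClosed.splits f) hx' ?_ fun z hz => ?_
        · rw [hdist _ hx', Complex.ofReal_re, abs_le]
          constructor <;> linarith
        · obtain ⟨-, hpos, hle⟩ := hroots z (hmem.mp hz)
          rw [hdist z hz, abs_le]
          constructor <;> linarith
    _ = ε * 4 ^ (P.natDegree - 1) := by rw [hmonic.natDegree_map]

theorem exists_greatest_real_root {P : ℤ[X]} (hP : P ≠ 0) {z : ℂ} (hz : aeval z P = 0)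
    (him : z.im = 0) : ∃ x : ℝ, aeval x P = 0 ∧ ∀ y : ℝ, aeval y P = 0 → y ≤ x := by
  obtain ⟨x, hx, hmax⟩ := Set.exists_max_image (P.rootSet ℝ) id (P.rootSet_finite ℝ)
    ⟨z.re, (mem_rootSet_of_ne hP).mpr (Complex.aeval_re_eq_zero hz him)⟩
  exact ⟨x, (mem_rootSet_of_ne hP).mp hx, fun y hy => hmax y ((mem_rootSet_of_ne hP).mpr hy)⟩

theorem largest_root_gt_general (p : ℕ) (hp : p.Prime) (h2p : ¬ (2 * p + 1).Prime)
    (P : Polynomial ℤ) (hmonic : P.Monic) (hirr : Irreducible P) (hdeg : P.natDegree = p)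
    (hroots : ∀ z : ℂ, aeval z P = 0 → z.im = 0 ∧ 0 < z.re) :
    ∃ x : ℝ, aeval x P = 0 ∧ 4 + (4 : ℝ) ^ (-(2 * (p : ℤ) + 3)) < x ∧
      ∀ y : ℝ, aeval y P = 0 → y ≤ x := by
  subst hdeg
  obtain ⟨z, hz⟩ := IsAlgClosed.exists_aeval_eq_zero ℂ P <| by
    rw [degree_eq_natDegree hmonic.ne_zero]; exact_mod_cast hp.ne_zero
  obtain ⟨x, hx, hmax⟩ := exists_greatest_real_root hmonic.ne_zero hz (hroots z hz).1
  have hle : ∀ w : ℂ, aeval w P = 0 → w.re ≤ x := fun w hw =>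
    hmax _ (Complex.aeval_re_eq_zero hw (hroots w hw).1)
  refine ⟨x, hx, lt_of_not_ge fun hx4 => ?_, hmax⟩
  rcases lt_or_ge x 4 with h4 | h4
  · exact h2p <| prime_two_mul_add_one_of_roots_mem_Ioo hmonic hirr hp
      (fun w hw => ⟨(hroots w hw).1, (hroots w hw).2, (hle w hw).trans_lt h4⟩) hz
  · have hδ4 : (4 : ℝ) ^ (-(2 * (P.natDegree : ℤ) + 3)) ≤ 4 :=
      (zpow_le_one_of_nonpos₀ (by norm_num) (by omega)).trans (by norm_num)
    have hδ : (4 : ℝ) ^ (-(2 * (P.natDegree : ℤ) + 3)) * 4 ^ (P.natDegree - 1) < 1 := by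
      rw [← zpow_natCast, ← zpow_add₀ four_ne_zero]
      exact zpow_lt_one_of_neg₀ (by norm_num) (by omega)
    have := one_le_mul_four_pow_of_roots_le hmonic
      (hirr.not_isRoot_of_natDegree_ne_one hp.ne_one) hδ4
      (fun w hw => ⟨(hroots w hw).1, (hroots w hw).2, (hle w hw).trans hx4⟩) hx h4
    linarith

/-- Let `p` be a prime such that `2 p + 1` is not prime, and let `P ∈ ℤ[X]` be a monic
irreducible polynomial of degree `p` with constant term `±1` all of whose complex roots are
real and positive. Then the largest root of `P` is strictly greater than `4 + 4 ^ (-(2 p + 3))`. -/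
theorem largest_root_gt (p : ℕ) (hp : p.Prime) (h2p : ¬ (2 * p + 1).Prime)
    (P : Polynomial ℤ) (hmonic : P.Monic) (hirr : Irreducible P) (hdeg : P.natDegree = p)
    (hconst : P.coeff 0 = 1 ∨ P.coeff 0 = -1)
    (hroots : ∀ z : ℂ, aeval z P = 0 → z.im = 0 ∧ 0 < z.re) :
    ∃ x : ℝ, aeval x P = 0 ∧ 4 + (4 : ℝ) ^ (-(2 * (p : ℤ) + 3)) < x ∧
      ∀ y : ℝ, aeval y P = 0 → y ≤ x :=
  largest_root_gt_general p hp h2p P hmonic hirr hdeg hroots
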